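/- arXiv:1812.01794 — 7 statements merged into one kernel-verified Lean document; each statement's English description precedes it below -/
import Mathlib

section
/- Let n ≥ 1 and 2 ≤ ℓ ≤ n be integers and let c be a real number with c ≥ 4n/(ℓ−1). Then for all p ∈ (0,1), (1 − p^c)·p^n ≥ Pr[W_{ℓ,n} > p and X_{(1),n} < p]; equivalently, the conditional probability that the maximum of c i.i.d. uniform draws exceeds p, given X_{(1),n} < p, is at least Pr[W_{ℓ,n} > p | X_{(1),n} < p]. Moreover, when ℓ = 2 the same conclusion holds already whenever c ≥ n. -/
open MeasureTheory Set

/-- The uniform distribution on `[0,1]`. -/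
noncomputable def unif : Measure ℝ := volume.restrict (Set.Icc 0 1)

instance : IsProbabilityMeasure unif := by
  constructor
  simp [unif, Real.volume_Icc]

/-- The `k`-th largest entry (1-indexed) of a tuple `x : Fin n → ℝ`. -/
noncomputable def kthLargest {n : ℕ} (x : Fin n → ℝ) (k : ℕ) : ℝ :=
  if h : n - k < n then x (Tuple.sort x ⟨n - k, h⟩) else 0

/-- Given the `n` draws `x` and an independent uniform `u ∈ [0,1]`, this is the random
variable `W_{ℓ,n}` which, conditioned on `x`, is uniform on `[X_{(ℓ),n}, 1]`. -/
noncomputable def Wvar {n : ℕ} (ℓ : ℕ) (x : Fin n → ℝ) (u : ℝ) : ℝ :=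
  kthLargest x ℓ + u * (1 - kthLargest x ℓ)

/-- The sample space for `n` i.i.d. uniforms `X` together with the independent auxiliary
uniform defining `W_{ℓ,n}`. -/
noncomputable def P₂ (n : ℕ) : Measure ((Fin n → ℝ) × ℝ) :=
  (Measure.pi fun _ : Fin n => unif).prod unif

/-!
Conditionally on the sample `x`, the variable `W` exceeds `p` with probability
`(1 - p) / (1 - z)`, where `z = X_(ℓ)`; so the probability to bound is `E[(1 - p) / (1 - Z); A]`
with `A = {X_(1) < p}` of probability `p ^ n`. Put `m = ⌊c⌋₊`, so that `m ≥ n / (ℓ - 1)`.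
Splitting geometric series gives, for `0 ≤ z < p < 1`,
`(1 - p) / (1 - z) + m p^m (1 - p) ≤ 1 - p^m + p^m (1 - p) · p / (p - z)`,
and `E[p / (p - Z); A] ≤ n / (ℓ - 1) · p ^ n`: writing `p / (p - z) = 1 + ∫₀^z p / (p - s)² ds`
and applying Tonelli reduces this to `P(A, Z > s) ≤ ∑_{j ≥ ℓ} C(n, j) (p - s)^j s^(n - j)`,
and the resulting Beta integrals telescope. Integrating the pointwise inequality over `A`
gives the bound `(1 - p ^ m) p ^ n ≤ (1 - p ^ c) p ^ n`.
-/

open scoped ENNReal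

section OrderStatistics

variable {n : ℕ}

lemma Monotone.lt_apply_iff_le_card {α : Type*} [LinearOrder α] {y : Fin n → α} (hy : Monotone y)
    (j : Fin n) (t : α) :
    t < y j ↔ n - j ≤ (Finset.univ.filter fun i => t < y i).card := by
  constructor
  · intro h
    calc n - j = (Finset.Ici j).card := (Fin.card_Ici j).symm
      _ ≤ _ := Finset.card_le_card fun i hi =>
        Finset.mem_filter.2 ⟨Finset.mem_univ i, h.trans_le (hy (Finset.mem_Ici.1 hi))⟩
  · intro h
    by_contra! hle
    have hsub : (Finset.univ.filter fun i => t < y i) ⊆ Finset.Ioi j := fun i hi => by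
      by_contra hij
      exact (Finset.mem_filter.1 hi).2.not_ge
        ((hy (not_lt.1 (mt Finset.mem_Ioi.2 hij))).trans hle)
    have := (Finset.card_le_card hsub).trans_eq (Fin.card_Ioi j)
    omega

lemma kthLargest_eq_apply_sort (x : Fin n → ℝ) {k : ℕ} (hk : 1 ≤ k) (hkn : k ≤ n) :
    kthLargest x k = x (Tuple.sort x ⟨n - k, by omega⟩) :=
  dif_pos (by omega)

lemma exists_kthLargest_eq (x : Fin n → ℝ) {k : ℕ} (hk : 1 ≤ k) (hkn : k ≤ n) :
    ∃ i, kthLargest x k = x i :=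
  ⟨_, kthLargest_eq_apply_sort x hk hkn⟩

lemma lt_kthLargest_iff (x : Fin n → ℝ) {k : ℕ} (hk : 1 ≤ k) (hkn : k ≤ n) (t : ℝ) :
    t < kthLargest x k ↔ k ≤ (Finset.univ.filter fun i => t < x i).card := by
  have hcard : (Finset.univ.filter fun j => t < x (Tuple.sort x j)).card
      = (Finset.univ.filter fun i => t < x i).card := by
    simp only [Finset.card_filter]
    exact Equiv.sum_comp (Tuple.sort x) fun i => if t < x i then 1 else 0
  rw [kthLargest_eq_apply_sort x hk hkn]
  change t < (x ∘ Tuple.sort x) _ ↔ _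
  rw [(Tuple.monotone_sort x).lt_apply_iff_le_card]
  simp only [Function.comp_apply, hcard, Nat.sub_sub_self hkn]

lemma kthLargest_one_lt_iff (x : Fin n → ℝ) (hn : 1 ≤ n) (p : ℝ) :
    kthLargest x 1 < p ↔ ∀ i, x i < p := by
  refine ⟨fun h i => ?_, fun h => ?_⟩
  · by_contra! hpi
    have hmem : i ∈ Finset.univ.filter fun j => kthLargest x 1 < x j :=
      Finset.mem_filter.2 ⟨Finset.mem_univ i, h.trans_le hpi⟩
    exact lt_irrefl _
      ((lt_kthLargest_iff x le_rfl hn _).2 (Finset.card_pos.2 ⟨i, hmem⟩))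
  · obtain ⟨i, hi⟩ := exists_kthLargest_eq x le_rfl hn
    exact hi ▸ h i

lemma measurable_kthLargest {k : ℕ} (hk : 1 ≤ k) (hkn : k ≤ n) :
    Measurable fun x : Fin n → ℝ => kthLargest x k := by
  refine measurable_of_Ioi fun t => ?_
  have hcard : Measurable fun x : Fin n → ℝ => (Finset.univ.filter fun i => t < x i).card := by
    simp only [Finset.card_filter]
    exact Finset.measurable_sum _ fun i _ =>
      Measurable.ite (measurableSet_lt measurable_const (measurable_pi_apply i))
        measurable_const measurable_const
  have hpre : (fun x : Fin n → ℝ => kthLargest x k) ⁻¹' Ioi t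
      = (fun x : Fin n → ℝ => (Finset.univ.filter fun i => t < x i).card) ⁻¹' Ici k :=
    Set.ext fun x => lt_kthLargest_iff x hk hkn t
  rw [hpre]
  exact hcard measurableSet_Ici

end OrderStatistics

noncomputable abbrev unifPi (n : ℕ) : Measure (Fin n → ℝ) := Measure.pi fun _ => unif

lemma unif_of_subset_Icc {s : Set ℝ} (hs : s ⊆ Icc 0 1) : unif s = volume s :=
  Measure.restrict_eq_self _ hs

instance : NullSingletonClass unif := by
  unfold unif; infer_instance

lemma unif_Iio {p : ℝ} (hp : p ≤ 1) : unif (Iio p) = ENNReal.ofReal p := by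
  have : Iio p ∩ Icc 0 1 = Ico 0 p := by
    ext x; simp only [mem_inter_iff, mem_Iio, mem_Icc, mem_Ico]
    constructor
    · rintro ⟨hxp, hx0, -⟩; exact ⟨hx0, hxp⟩
    · rintro ⟨hx0, hxp⟩; exact ⟨hxp, hx0, hxp.le.trans hp⟩
  rw [unif, Measure.restrict_apply measurableSet_Iio, this, Real.volume_Ico, sub_zero]

lemma unif_Iic {p : ℝ} (hp : p ≤ 1) : unif (Iic p) = ENNReal.ofReal p := by
  rw [← unif_Iio hp, measure_congr Iio_ae_eq_Iic]

lemma unif_Ioi {r : ℝ} (h0 : 0 ≤ r) (h1 : r ≤ 1) : unif (Ioi r) = ENNReal.ofReal (1 - r) := by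
  rw [← compl_Iic, prob_compl_eq_one_sub measurableSet_Iic, unif_Iic h1,
    ← ENNReal.ofReal_one, ENNReal.ofReal_sub _ h0]

lemma ae_unifPi_nonneg (n : ℕ) : ∀ᵐ x ∂unifPi n, ∀ i, 0 ≤ x i :=
  ae_all_iff.2 fun _ => Measure.tendsto_eval_ae_ae.eventually <|
    ae_restrict_of_forall_mem measurableSet_Icc fun _ ht => ht.1

lemma unifPi_forall_lt {n : ℕ} {p : ℝ} (hp : p ≤ 1) :
    unifPi n {x | ∀ i, x i < p} = ENNReal.ofReal p ^ n := by
  have : {x : Fin n → ℝ | ∀ i, x i < p} = Set.pi univ fun _ => Iio p := by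
    ext x; simp
  rw [this, Measure.pi_pi]
  simp [unif_Iio hp]

lemma measurableSet_forall_lt {n : ℕ} (p : ℝ) : MeasurableSet {x : Fin n → ℝ | ∀ i, x i < p} := by
  simp only [ofPred_forall]
  exact MeasurableSet.iInter fun i => measurableSet_lt (measurable_pi_apply i) measurable_const

lemma integral_pow_mul_sub_pow (p : ℝ) (a b : ℕ) :
    ∫ s in (0 : ℝ)..p, s ^ a * (p - s) ^ b
      = p ^ (a + b + 1) * (a.factorial * b.factorial / (a + b + 1).factorial) := by
  induction b generalizing a with
  | zero =>
    simp only [pow_zero, mul_one, integral_pow, add_zero, Nat.factorial_zero, Nat.cast_one,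
      Nat.factorial_succ, Nat.cast_mul]
    field_simp
    push_cast
    ring
  | succ b ih =>
    have hu : ∀ s ∈ uIcc 0 p, HasDerivAt (fun s : ℝ => (p - s) ^ (b + 1))
        (-((b + 1) * (p - s) ^ b)) s := fun s _ =>
      (((hasDerivAt_id' s).const_sub p).fun_pow (b + 1)).congr_deriv (by push_cast; simp)
    have hv : ∀ s ∈ uIcc 0 p, HasDerivAt (fun s : ℝ => s ^ (a + 1) / (a + 1)) (s ^ a) s :=
      fun s _ =>
        ((hasDerivAt_pow (a + 1) s).div_const ((a : ℝ) + 1)).congr_deriv (by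
          push_cast; field_simp)
    have hparts := intervalIntegral.integral_mul_deriv_eq_deriv_mul hu hv
      (by apply Continuous.intervalIntegrable; fun_prop)
      (by apply Continuous.intervalIntegrable; fun_prop)
    calc ∫ s in (0 : ℝ)..p, s ^ a * (p - s) ^ (b + 1)
        = ∫ s in (0 : ℝ)..p, (p - s) ^ (b + 1) * s ^ a := by simp_rw [mul_comm]
      _ = (b + 1) / (a + 1) * ∫ s in (0 : ℝ)..p, s ^ (a + 1) * (p - s) ^ b := by
        rw [hparts, ← intervalIntegral.integral_const_mul]
        simp only [sub_self, zero_pow (Nat.succ_ne_zero _), zero_mul, zero_div, mul_zero,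
          sub_zero, zero_sub, ← intervalIntegral.integral_neg]
        congr 1 with s
        field_simp
      _ = _ := by
        rw [ih (a + 1)]
        simp only [Nat.factorial_succ, Nat.cast_mul, Nat.cast_add, Nat.cast_one,
          show a + 1 + b + 1 = a + (b + 1) + 1 by ring]
        field_simp

lemma choose_mul_factorial_div_factorial {n j : ℕ} (hj : 2 ≤ j) (hjn : j ≤ n) :
    n.choose j * ((n - j).factorial * (j - 2).factorial / (n - 1).factorial : ℝ)
      = n / (j - 1 : ℕ) - n / j := by
  obtain ⟨i, rfl⟩ : ∃ i, j = i + 2 := ⟨j - 2, by omega⟩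
  obtain ⟨m, rfl⟩ : ∃ m, n = m + 1 := ⟨n - 1, by omega⟩
  rw [Nat.cast_choose ℝ hjn]
  simp only [Nat.add_sub_cancel, Nat.factorial_succ, Nat.cast_mul, Nat.cast_add, Nat.cast_one,
    Nat.cast_ofNat, show i + 2 - 1 = i + 1 by omega]
  field_simp
  ring

lemma sum_choose_mul_factorial_div_factorial {n ℓ : ℕ} (hℓ : 2 ≤ ℓ) (hℓn : ℓ ≤ n) :
    ∑ j ∈ Finset.Icc ℓ n,
        n.choose j * ((n - j).factorial * (j - 2).factorial / (n - 1).factorial : ℝ)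
      = n / ((ℓ : ℝ) - 1) - 1 := by
  rw [Finset.sum_congr rfl fun j hj => choose_mul_factorial_div_factorial
      (hℓ.trans (Finset.mem_Icc.1 hj).1) (Finset.mem_Icc.1 hj).2]
  have htelescope := Finset.sum_Ico_sub (f := fun j : ℕ => -(n / (j - 1 : ℕ) : ℝ))
    (Nat.le_add_right_of_le hℓn : ℓ ≤ n + 1)
  simp only [Nat.succ_sub_one, neg_sub_neg] at htelescope
  rw [← Finset.Ico_add_one_right_eq_Icc, htelescope, div_self (by norm_cast; omega),
    Nat.cast_sub (by omega : 1 ≤ ℓ), Nat.cast_one]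

lemma sum_card_le_card_eq_sum_choose {M : Type*} [AddCommMonoid M] (f : ℕ → M) (ℓ n : ℕ) :
    ∑ T ∈ (Finset.univ : Finset (Finset (Fin n))).filter (fun T => ℓ ≤ T.card), f T.card
      = ∑ j ∈ Finset.Icc ℓ n, n.choose j • f j := by
  have := Finset.sum_powerset_apply_card (fun j => if ℓ ≤ j then f j else 0)
    (x := (Finset.univ : Finset (Fin n)))
  rw [Finset.powerset_univ, Finset.card_univ, Fintype.card_fin] at this
  rw [Finset.sum_filter, this]
  simp only [smul_ite, smul_zero]
  rw [← Finset.sum_filter]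
  congr 1
  ext j
  simp only [Finset.mem_filter, Finset.mem_range, Finset.mem_Icc]
  omega

lemma unifPi_lt_kthLargest_inter_forall_lt_le {n ℓ : ℕ} (hℓ : 1 ≤ ℓ) (hℓn : ℓ ≤ n) {s p : ℝ}
    (hs : 0 ≤ s) (hsp : s ≤ p) (hp : p ≤ 1) :
    unifPi n ({x | s < kthLargest x ℓ} ∩ {x | ∀ i, x i < p})
      ≤ ENNReal.ofReal (∑ j ∈ Finset.Icc ℓ n, n.choose j * ((p - s) ^ j * s ^ (n - j))) := by
  let box (T : Finset (Fin n)) : Set (Fin n → ℝ) :=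
    Set.pi univ fun i => if i ∈ T then Ioo s p else Iic s
  have hsub : {x | s < kthLargest x ℓ} ∩ {x | ∀ i, x i < p}
      ⊆ ⋃ T ∈ (Finset.univ : Finset (Finset (Fin n))).filter (fun T => ℓ ≤ T.card), box T := by
    rintro x ⟨hsx, hxp⟩
    refine Set.mem_biUnion (x := Finset.univ.filter fun i => s < x i) ?_ ?_
    · exact Finset.mem_filter.2 ⟨Finset.mem_univ _, (lt_kthLargest_iff x hℓ hℓn s).1 hsx⟩
    · intro i _
      by_cases hi : s < x i
      · simpa [hi] using hxp i
      · simpa [hi] using not_lt.1 hi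
  have hbox : ∀ T, unifPi n (box T) = ENNReal.ofReal ((p - s) ^ T.card * s ^ (n - T.card)) := by
    intro T
    have hIoo : unif (Ioo s p) = ENNReal.ofReal (p - s) := by
      rw [unif_of_subset_Icc fun t ht => ⟨hs.trans ht.1.le, ht.2.le.trans hp⟩, Real.volume_Ioo]
    simp only [box, Measure.pi_pi, apply_ite unif, hIoo, unif_Iic (hsp.trans hp)]
    rw [Finset.prod_ite, Finset.prod_const, Finset.prod_const, ENNReal.ofReal_mul (by positivity),
      ENNReal.ofReal_pow (sub_nonneg.2 hsp), ENNReal.ofReal_pow hs]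
    simp [Finset.filter_not, Finset.card_sdiff]
  calc unifPi n ({x | s < kthLargest x ℓ} ∩ {x | ∀ i, x i < p})
      ≤ ∑ T ∈ (Finset.univ : Finset (Finset (Fin n))).filter (fun T => ℓ ≤ T.card),
          unifPi n (box T) := (measure_mono hsub).trans (measure_biUnion_finset_le _ _)
    _ = ENNReal.ofReal (∑ j ∈ Finset.Icc ℓ n, n.choose j * ((p - s) ^ j * s ^ (n - j))) := by
      simp only [hbox]
      rw [← ENNReal.ofReal_sum_of_nonneg, sum_card_le_card_eq_sum_choose
        (fun j => (p - s) ^ j * s ^ (n - j))]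
      · simp only [nsmul_eq_mul]
      · intro T _
        have : 0 ≤ p - s := sub_nonneg.2 hsp
        positivity

lemma ofReal_div_sub_eq_one_add_lintegral {p z : ℝ} (hz : 0 ≤ z) (hzp : z < p) :
    ENNReal.ofReal (p / (p - z))
      = 1 + ∫⁻ s in Ioo 0 p, (Iio z).indicator (fun s => ENNReal.ofReal (p / (p - s) ^ 2)) s := by
  have hderiv : ∀ s ∈ uIcc 0 z, HasDerivAt (fun s => p / (p - s)) (p / (p - s) ^ 2) s := by
    intro s hs
    rw [uIcc_of_le hz] at hs
    have hps : p - s ≠ 0 := by linarith [hs.2]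
    exact ((hasDerivAt_const s p).div ((hasDerivAt_id' s).const_sub p) hps).congr_deriv
      (by ring)
  have hcont : ContinuousOn (fun s => p / (p - s) ^ 2) (Icc 0 z) := by
    refine continuousOn_const.div (by fun_prop) fun s hs => ?_
    have : s < p := hs.2.trans_lt hzp
    positivity
  have hFTC : ∫ s in (0 : ℝ)..z, p / (p - s) ^ 2 = p / (p - z) - 1 := by
    rw [intervalIntegral.integral_eq_sub_of_hasDerivAt hderiv
      ((uIcc_of_le hz).symm ▸ hcont).intervalIntegrable, sub_zero, div_self (by linarith)]
  have hIoo : Iio z ∩ Ioo 0 p = Ioo 0 z := by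
    ext s; simp only [mem_inter_iff, mem_Iio, mem_Ioo]
    constructor
    · rintro ⟨hsz, hs0, -⟩; exact ⟨hs0, hsz⟩
    · rintro ⟨hs0, hsz⟩; exact ⟨hsz, hs0, hsz.trans hzp⟩
  rw [lintegral_indicator measurableSet_Iio, Measure.restrict_restrict measurableSet_Iio, hIoo,
    ← ofReal_integral_eq_lintegral_ofReal, ← integral_Ioc_eq_integral_Ioo,
    ← intervalIntegral.integral_of_le hz, hFTC, ← ENNReal.ofReal_one,
    ← ENNReal.ofReal_add zero_le_one, add_sub_cancel]
  · rw [sub_nonneg, le_div_iff₀ (by linarith)]; linarith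
  · exact (hcont.integrableOn_Icc).mono_set Ioo_subset_Icc_self
  · exact ae_restrict_of_forall_mem measurableSet_Ioo fun s hs =>
      div_nonneg (by linarith) (sq_nonneg _)

lemma lintegral_ofReal_div_sub_eq {α : Type*} [MeasurableSpace α] (μ : Measure α) [SFinite μ]
    {f : α → ℝ} (hf : Measurable f) {p : ℝ} (hfp : ∀ᵐ x ∂μ, f x ∈ Ico 0 p) :
    ∫⁻ x, ENNReal.ofReal (p / (p - f x)) ∂μ
      = μ univ + ∫⁻ s in Ioo 0 p, ENNReal.ofReal (p / (p - s) ^ 2) * μ {x | s < f x} := by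
  set G : ℝ → ℝ≥0∞ := fun s => ENNReal.ofReal (p / (p - s) ^ 2)
  have hG : Measurable G := by unfold G; fun_prop
  have hmeas : Measurable (Function.uncurry fun x s => (Iio (f x)).indicator G s) := by
    simp only [Function.uncurry_def, Set.indicator_apply, mem_Iio]
    exact Measurable.ite (measurableSet_lt measurable_snd (hf.comp measurable_fst))
      (hG.comp measurable_snd) measurable_const
  calc ∫⁻ x, ENNReal.ofReal (p / (p - f x)) ∂μ
      = ∫⁻ x, (1 + ∫⁻ s in Ioo 0 p, (Iio (f x)).indicator G s) ∂μ :=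
        lintegral_congr_ae (hfp.mono fun x hx => ofReal_div_sub_eq_one_add_lintegral hx.1 hx.2)
    _ = μ univ + ∫⁻ s in Ioo 0 p, ∫⁻ x, (Iio (f x)).indicator G s ∂μ := by
      rw [lintegral_add_left measurable_const, lintegral_const, one_mul,
        lintegral_lintegral_swap hmeas.aemeasurable]
    _ = μ univ + ∫⁻ s in Ioo 0 p, G s * μ {x | s < f x} := by
      congr 1
      refine lintegral_congr fun s => ?_
      rw [← lintegral_indicator_const (measurableSet_lt measurable_const hf)]
      congr 1 with x

lemma one_le_div_sub_one {n ℓ : ℕ} (hℓ : 2 ≤ ℓ) (hℓn : ℓ ≤ n) : 1 ≤ n / ((ℓ : ℝ) - 1) := by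
  have h2ℓ : (2 : ℝ) ≤ ℓ := by exact_mod_cast hℓ
  have hℓn' : (ℓ : ℝ) ≤ n := by exact_mod_cast hℓn
  rw [one_le_div (by linarith)]
  linarith

lemma integral_sum_choose_mul_pow_mul_sub_pow {n ℓ : ℕ} (hℓ : 2 ≤ ℓ) (hℓn : ℓ ≤ n) (p : ℝ) :
    ∫ s in (0 : ℝ)..p, ∑ j ∈ Finset.Icc ℓ n, n.choose j * (p * (s ^ (n - j) * (p - s) ^ (j - 2)))
      = p ^ n * (n / ((ℓ : ℝ) - 1) - 1) := by
  rw [intervalIntegral.integral_finsetSum fun j _ => by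
    apply Continuous.intervalIntegrable; fun_prop]
  simp only [intervalIntegral.integral_const_mul, integral_pow_mul_sub_pow]
  rw [← sum_choose_mul_factorial_div_factorial hℓ hℓn, Finset.mul_sum]
  refine Finset.sum_congr rfl fun j hj => ?_
  obtain ⟨hℓj, hjn⟩ := Finset.mem_Icc.1 hj
  rw [show n - j + (j - 2) + 1 = n - 1 by omega]
  have hpow : p * p ^ (n - 1) = p ^ n := by rw [← pow_succ', Nat.sub_add_cancel (by omega)]
  rw [← hpow]
  ring

lemma ae_restrict_kthLargest_mem_Ico {n ℓ : ℕ} (hℓ : 1 ≤ ℓ) (hℓn : ℓ ≤ n) (p : ℝ) :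
    ∀ᵐ x ∂(unifPi n).restrict {x | ∀ i, x i < p}, kthLargest x ℓ ∈ Ico 0 p := by
  filter_upwards [ae_restrict_of_ae (ae_unifPi_nonneg n),
    ae_restrict_mem (measurableSet_forall_lt p)] with x hx0 hxp
  obtain ⟨i, hi⟩ := exists_kthLargest_eq x hℓ hℓn
  exact ⟨hi ▸ hx0 i, hi ▸ hxp i⟩

lemma setLIntegral_Ioo_mul_unifPi_lt_kthLargest_le {n ℓ : ℕ} (hℓ : 2 ≤ ℓ) (hℓn : ℓ ≤ n)
    {p : ℝ} (hp0 : 0 < p) (hp1 : p ≤ 1) :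
    ∫⁻ s in Ioo 0 p, ENNReal.ofReal (p / (p - s) ^ 2)
        * unifPi n ({x | s < kthLargest x ℓ} ∩ {x | ∀ i, x i < p})
      ≤ ENNReal.ofReal (p ^ n * (n / ((ℓ : ℝ) - 1) - 1)) := by
  set h : ℝ → ℝ := fun s =>
    ∑ j ∈ Finset.Icc ℓ n, n.choose j * (p * (s ^ (n - j) * (p - s) ^ (j - 2)))
  have htail : ∀ s ∈ Ioo 0 p, ENNReal.ofReal (p / (p - s) ^ 2)
      * unifPi n ({x | s < kthLargest x ℓ} ∩ {x | ∀ i, x i < p}) ≤ ENNReal.ofReal (h s) := by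
    rintro s ⟨hs0, hsp⟩
    grw [unifPi_lt_kthLargest_inter_forall_lt_le (by omega) hℓn hs0.le hsp.le hp1]
    rw [← ENNReal.ofReal_mul (by positivity), Finset.mul_sum]
    refine le_of_eq (congrArg _ (Finset.sum_congr rfl fun j hj => ?_))
    obtain ⟨i, rfl⟩ : ∃ i, j = i + 2 := ⟨j - 2, by have := (Finset.mem_Icc.1 hj).1; omega⟩
    have hps : p - s ≠ 0 := by linarith
    simp only [Nat.add_sub_cancel]
    field_simp
    ring
  grw [setLIntegral_mono' measurableSet_Ioo htail]
  rw [← ofReal_integral_eq_lintegral_ofReal, ← integral_Ioc_eq_integral_Ioo,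
    ← intervalIntegral.integral_of_le hp0.le, integral_sum_choose_mul_pow_mul_sub_pow hℓ hℓn]
  · exact (Continuous.integrableOn_Icc (by fun_prop)).mono_set Ioo_subset_Icc_self
  · refine ae_restrict_of_forall_mem measurableSet_Ioo fun s hs => ?_
    have : 0 ≤ p - s := by linarith [hs.2]
    have := hs.1.le
    positivity

lemma setLIntegral_div_sub_kthLargest_le {n ℓ : ℕ} (hℓ : 2 ≤ ℓ) (hℓn : ℓ ≤ n) {p : ℝ}
    (hp0 : 0 < p) (hp1 : p ≤ 1) :
    ∫⁻ x in {x | ∀ i, x i < p}, ENNReal.ofReal (p / (p - kthLargest x ℓ)) ∂unifPi n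
      ≤ ENNReal.ofReal (n / ((ℓ : ℝ) - 1) * p ^ n) := by
  have hZ := measurable_kthLargest (n := n) (by omega : 1 ≤ ℓ) hℓn
  rw [lintegral_ofReal_div_sub_eq _ hZ (ae_restrict_kthLargest_mem_Ico (by omega) hℓn p),
    Measure.restrict_apply_univ, unifPi_forall_lt hp1]
  simp only [Measure.restrict_apply (measurableSet_lt measurable_const hZ)]
  grw [setLIntegral_Ioo_mul_unifPi_lt_kthLargest_le hℓ hℓn hp0 hp1]
  rw [← ENNReal.ofReal_pow hp0.le, ← ENNReal.ofReal_add (by positivity)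
    (mul_nonneg (by positivity) (by linarith [one_le_div_sub_one hℓ hℓn]))]
  exact le_of_eq (congrArg _ (by ring))

lemma one_div_one_sub_mul_add_le {p y : ℝ} (hp0 : 0 < p) (hp1 : p < 1) (hy0 : 0 ≤ y)
    (hy1 : y < 1) (m : ℕ) :
    1 / (1 - p * y) + m * p ^ m ≤ (1 - p ^ m) / (1 - p) + p ^ m / (1 - y) := by
  have hpy : p * y < 1 := by nlinarith
  have hsplit : ∀ x : ℝ, x < 1 → 1 / (1 - x) = ∑ k ∈ Finset.range m, x ^ k + x ^ m / (1 - x) :=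
    fun x hx => by
      have : 1 - x ≠ 0 := by linarith
      have : x - 1 ≠ 0 := by linarith
      rw [geom_sum_eq hx.ne]
      field_simp
      ring
  have hgeom : (1 - p ^ m) / (1 - p) = ∑ k ∈ Finset.range m, p ^ k := by
    rw [geom_sum_eq hp1.ne, ← neg_div_neg_eq, neg_sub, neg_sub]
  have hhead : ∑ k ∈ Finset.range m, (p * y) ^ k + m * p ^ m
      ≤ ∑ k ∈ Finset.range m, p ^ k + p ^ m * ∑ k ∈ Finset.range m, y ^ k := by
    have hconst : (m : ℝ) * p ^ m = ∑ _k ∈ Finset.range m, p ^ m := by simp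
    rw [hconst, Finset.mul_sum, ← Finset.sum_add_distrib, ← Finset.sum_add_distrib]
    refine Finset.sum_le_sum fun k hk => ?_
    have hpk : p ^ m ≤ p ^ k :=
      pow_le_pow_of_le_one hp0.le hp1.le (Finset.mem_range.1 hk).le
    have hyk : y ^ k ≤ 1 := pow_le_one₀ hy0 hy1.le
    rw [mul_pow]
    nlinarith [mul_nonneg (sub_nonneg.2 hpk) (sub_nonneg.2 hyk)]
  have htail : (p * y) ^ m / (1 - p * y) ≤ p ^ m * (y ^ m / (1 - y)) := by
    rw [mul_pow, ← mul_div_assoc]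
    exact div_le_div_of_nonneg_left (by positivity) (by linarith) (by nlinarith)
  rw [hgeom, hsplit _ hpy, div_eq_mul_one_div (p ^ m), hsplit _ hy1]
  linarith

lemma ofReal_div_one_sub_add_le {p z : ℝ} (hz0 : 0 ≤ z) (hzp : z < p) (hp1 : p < 1) (m : ℕ) :
    ENNReal.ofReal ((1 - p) / (1 - z)) + ENNReal.ofReal (m * p ^ m * (1 - p))
      ≤ ENNReal.ofReal (1 - p ^ m)
        + ENNReal.ofReal (p ^ m * (1 - p)) * ENNReal.ofReal (p / (p - z)) := by
  have hp0 : 0 < p := hz0.trans_lt hzp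
  have h1p : 0 < 1 - p := by linarith
  have hy := one_div_one_sub_mul_add_le hp0 hp1 (div_nonneg hz0 hp0.le)
    ((div_lt_one hp0).2 hzp) m
  rw [mul_div_cancel₀ z hp0.ne', one_sub_div hp0.ne', div_div_eq_mul_div] at hy
  have hreal : (1 - p) / (1 - z) + m * p ^ m * (1 - p)
      ≤ (1 - p ^ m) + p ^ m * (1 - p) * (p / (p - z)) :=
    calc (1 - p) / (1 - z) + m * p ^ m * (1 - p) = (1 - p) * (1 / (1 - z) + m * p ^ m) := by
          ring
      _ ≤ (1 - p) * ((1 - p ^ m) / (1 - p) + p ^ m * p / (p - z)) := by gcongr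
      _ = (1 - p ^ m) + p ^ m * (1 - p) * (p / (p - z)) := by field_simp
  rw [← ENNReal.ofReal_mul (by positivity), ← ENNReal.ofReal_add
    (div_nonneg h1p.le (by linarith)) (by positivity)]
  exact (ENNReal.ofReal_le_ofReal hreal).trans ENNReal.ofReal_add_le

lemma unif_lt_Wvar {n : ℕ} (ℓ : ℕ) (x : Fin n → ℝ) {p : ℝ} (hp : p ≤ 1)
    (hxp : kthLargest x ℓ < p) :
    unif {u | p < Wvar ℓ x u} = ENNReal.ofReal ((1 - p) / (1 - kthLargest x ℓ)) := by
  set z := kthLargest x ℓ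
  have hz : 0 < 1 - z := by linarith
  have hset : {u | p < Wvar ℓ x u} = Ioi ((p - z) / (1 - z)) := by
    ext u
    simp only [Wvar, mem_ofPred_eq, mem_Ioi, div_lt_iff₀ hz]
    constructor <;> intro h <;> linarith
  rw [hset, unif_Ioi (div_nonneg (by linarith) hz.le) ((div_le_one hz).2 (by linarith))]
  congr 1
  field_simp
  ring

lemma P₂_lt_Wvar_and_kthLargest_one_lt_eq {n ℓ : ℕ} (hℓ : 1 ≤ ℓ) (hℓn : ℓ ≤ n) {p : ℝ}
    (hp : p ≤ 1) :
    P₂ n {ω | p < Wvar ℓ ω.1 ω.2 ∧ kthLargest ω.1 1 < p}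
      = ∫⁻ x in {x | ∀ i, x i < p}, ENNReal.ofReal ((1 - p) / (1 - kthLargest x ℓ)) ∂unifPi n := by
  have hZ := measurable_kthLargest (n := n) hℓ hℓn
  have hmax := measurable_kthLargest (n := n) le_rfl (hℓ.trans hℓn)
  have hE : MeasurableSet {ω : (Fin n → ℝ) × ℝ | p < Wvar ℓ ω.1 ω.2 ∧ kthLargest ω.1 1 < p} := by
    have hW : Measurable fun ω : (Fin n → ℝ) × ℝ => Wvar ℓ ω.1 ω.2 := by
      unfold Wvar; fun_prop
    exact (measurableSet_lt measurable_const hW).inter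
      (measurableSet_lt (hmax.comp measurable_fst) measurable_const)
  rw [P₂, Measure.prod_apply hE, ← lintegral_indicator (measurableSet_forall_lt p)]
  refine lintegral_congr fun x => ?_
  by_cases hx : x ∈ {x : Fin n → ℝ | ∀ i, x i < p}
  · obtain ⟨i, hi⟩ := exists_kthLargest_eq x hℓ hℓn
    rw [indicator_of_mem hx, ← unif_lt_Wvar ℓ x hp (hi ▸ hx i)]
    congr 1 with u
    simp [(kthLargest_one_lt_iff x (hℓ.trans hℓn) p).2 hx]
  · rw [indicator_of_notMem hx]
    convert measure_empty (μ := unif)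
    ext u
    simp only [mem_preimage, mem_ofPred_eq, kthLargest_one_lt_iff x (hℓ.trans hℓn) p,
      mem_empty_iff_false, iff_false, not_and]
    exact fun _ => hx

lemma P₂_lt_Wvar_and_kthLargest_one_lt_le {n ℓ m : ℕ} (hℓ : 2 ≤ ℓ) (hℓn : ℓ ≤ n)
    (hm : n / ((ℓ : ℝ) - 1) ≤ m) {p : ℝ} (hp0 : 0 < p) (hp1 : p < 1) :
    P₂ n {ω | p < Wvar ℓ ω.1 ω.2 ∧ kthLargest ω.1 1 < p}
      ≤ ENNReal.ofReal ((1 - p ^ m) * p ^ n) := by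
  set A : Set (Fin n → ℝ) := {x | ∀ i, x i < p}
  set C : ℝ≥0∞ := ENNReal.ofReal (m * p ^ m * (1 - p)) * ENNReal.ofReal (p ^ n) with hC
  have hA : unifPi n A = ENNReal.ofReal (p ^ n) := by
    rw [unifPi_forall_lt hp1.le, ENNReal.ofReal_pow hp0.le]
  have hZ := measurable_kthLargest (n := n) (by omega : 1 ≤ ℓ) hℓn
  have hsum : P₂ n {ω | p < Wvar ℓ ω.1 ω.2 ∧ kthLargest ω.1 1 < p} + C
      ≤ ENNReal.ofReal ((1 - p ^ m) * p ^ n) + C :=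
    calc P₂ n {ω | p < Wvar ℓ ω.1 ω.2 ∧ kthLargest ω.1 1 < p} + C
        = ∫⁻ x in A, (ENNReal.ofReal ((1 - p) / (1 - kthLargest x ℓ))
            + ENNReal.ofReal (m * p ^ m * (1 - p))) ∂unifPi n := by
          rw [lintegral_add_right _ measurable_const, setLIntegral_const, hA,
            P₂_lt_Wvar_and_kthLargest_one_lt_eq (by omega) hℓn hp1.le]
      _ ≤ ∫⁻ x in A, (ENNReal.ofReal (1 - p ^ m)
            + ENNReal.ofReal (p ^ m * (1 - p)) * ENNReal.ofReal (p / (p - kthLargest x ℓ)))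
            ∂unifPi n := lintegral_mono_ae <| (ae_restrict_kthLargest_mem_Ico (by omega) hℓn p).mono
              fun x hx => ofReal_div_one_sub_add_le hx.1 hx.2 hp1 m
      _ = ENNReal.ofReal (1 - p ^ m) * ENNReal.ofReal (p ^ n) + ENNReal.ofReal (p ^ m * (1 - p))
            * ∫⁻ x in A, ENNReal.ofReal (p / (p - kthLargest x ℓ)) ∂unifPi n := by
          rw [lintegral_add_left measurable_const, setLIntegral_const, hA,
            lintegral_const_mul _ (by fun_prop)]
      _ ≤ ENNReal.ofReal (1 - p ^ m) * ENNReal.ofReal (p ^ n) + ENNReal.ofReal (p ^ m * (1 - p))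
            * ENNReal.ofReal (m * p ^ n) := by
          grw [setLIntegral_div_sub_kthLargest_le hℓ hℓn hp0 hp1.le]
          gcongr
      _ = ENNReal.ofReal ((1 - p ^ m) * p ^ n) + C := by
          rw [hC, ← ENNReal.ofReal_mul (by linarith [pow_le_one₀ (n := m) hp0.le hp1.le]),
            ← ENNReal.ofReal_mul (by positivity), ← ENNReal.ofReal_mul (by positivity)]
          ring_nf
  exact (ENNReal.add_le_add_iff_right (by finiteness)).1 hsum

theorem stmt2_general (n ℓ : ℕ) (c : ℝ) (hℓ2 : 2 ≤ ℓ) (hℓn : ℓ ≤ n)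
    (hc : (4 * n : ℝ) / ((ℓ : ℝ) - 1) ≤ c ∨ (ℓ = 2 ∧ (n : ℝ) ≤ c)) :
    ∀ p ∈ Set.Ioo (0 : ℝ) 1,
      (P₂ n {ω : (Fin n → ℝ) × ℝ |
          p < Wvar ℓ ω.1 ω.2 ∧ kthLargest ω.1 1 < p}).toReal ≤ (1 - p ^ c) * p ^ n := by
  rintro p ⟨hp0, hp1⟩
  have hr := one_le_div_sub_one hℓ2 hℓn
  have hc0 : 0 ≤ c := by
    rcases hc with hc | ⟨-, hc⟩
    · rw [mul_div_assoc] at hc; linarith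
    · exact (Nat.cast_nonneg n).trans hc
  have hfloor : n / ((ℓ : ℝ) - 1) ≤ ⌊c⌋₊ := by
    rcases hc with hc | ⟨rfl, hc⟩
    · rw [mul_div_assoc] at hc
      linarith [Nat.sub_one_lt_floor c]
    · rw [Nat.cast_ofNat, show (2 : ℝ) - 1 = 1 by norm_num, div_one]
      exact_mod_cast Nat.le_floor hc
  have hpc : p ^ c ≤ p ^ ⌊c⌋₊ := by
    rw [← Real.rpow_natCast]
    exact Real.rpow_le_rpow_of_exponent_ge hp0 hp1.le (Nat.floor_le hc0)
  calc _ ≤ (1 - p ^ ⌊c⌋₊) * p ^ n := ENNReal.toReal_le_of_le_ofReal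
        (mul_nonneg (by linarith [pow_le_one₀ (n := ⌊c⌋₊) hp0.le hp1.le]) (by positivity))
        (P₂_lt_Wvar_and_kthLargest_one_lt_le hℓ2 hℓn hfloor hp0 hp1)
    _ ≤ (1 - p ^ c) * p ^ n := by gcongr

/-- For `1 ≤ n`, `2 ≤ ℓ ≤ n` and a real `c ≥ 4n/(ℓ-1)` (or, when `ℓ = 2`,
merely `c ≥ n`), for all `p ∈ (0,1)` one has
`(1 - p^c)·p^n ≥ Pr[W_{ℓ,n} > p ∧ X_{(1),n} < p]`, i.e. the conditional probability that the
maximum of `c` i.i.d. uniforms exceeds `p` given `X_{(1),n} < p` is at least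
`Pr[W_{ℓ,n} > p | X_{(1),n} < p]`. -/
theorem stmt2 (n ℓ : ℕ) (c : ℝ) (hn : 1 ≤ n) (hℓ2 : 2 ≤ ℓ) (hℓn : ℓ ≤ n)
    (hc : (4 * n : ℝ) / ((ℓ : ℝ) - 1) ≤ c ∨ (ℓ = 2 ∧ (n : ℝ) ≤ c)) :
    ∀ p ∈ Set.Ioo (0 : ℝ) 1,
      (P₂ n {ω : (Fin n → ℝ) × ℝ |
          p < Wvar ℓ ω.1 ω.2 ∧ kthLargest ω.1 1 < p}).toReal ≤ (1 - p ^ c) * p ^ n :=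
  stmt2_general n ℓ c hℓ2 hℓn hc
end

section
/- Let n ≥ 2 be an integer. Then W_{2,n} is identically distributed to the maximum of n i.i.d. uniform draws from [0,1]; that is, for every p ∈ [0,1], Pr[W_{2,n} ≤ p] = p^n. -/
open MeasureTheory Set

/-- The sample space for `n` i.i.d. uniforms `X` together with the independent auxiliary
uniform defining `W_{2,n}`. -/
noncomputable def P₃ (n : ℕ) : Measure ((Fin n → ℝ) × ℝ) :=
  (Measure.pi fun _ : Fin n => unif).prod unif


/-!
Integrate out the auxiliary uniform `u` last. For `u < 1`, `W ≤ p` means that the second largest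
draw is at most `t = (p - u) / (1 - u)`, i.e. that at most one draw exceeds `t`, which has
probability `tⁿ + n (1 - t) tⁿ⁻¹`. For `u ≥ p` we have `t ≤ 0` and this probability vanishes, so
`Pr[W ≤ p] = ∫₀ᵖ (tⁿ + n (1 - t) tⁿ⁻¹) du`. The integrand is the derivative in `u` of
`-(1 - u) tⁿ`, which is `0` at `u = p` and `-pⁿ` at `u = 0`.
-/

lemma kthLargest_two_le_iff {n : ℕ} (hn : 2 ≤ n) (x : Fin n → ℝ) (t : ℝ) :
    kthLargest x 2 ≤ t ↔ ∃ i, ∀ j ≠ i, x j ≤ t := by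
  set σ := Tuple.sort x
  have hmono : Monotone (x ∘ σ) := Tuple.monotone_sort x
  set top : Fin n := ⟨n - 1, by omega⟩
  set snd : Fin n := ⟨n - 2, by omega⟩
  have hsnd_top : snd < top := Fin.mk_lt_mk.2 (by omega)
  rw [show kthLargest x 2 = x (σ snd) from dif_pos (by omega)]
  constructor
  · intro h
    refine ⟨σ top, fun j hj => ?_⟩
    have hj_snd : σ.symm j ≤ snd := by
      have hj_top : (σ.symm j : ℕ) ≠ n - 1 := fun he =>
        hj (by rw [← σ.apply_symm_apply j, show σ.symm j = top from Fin.ext he])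
      have := (σ.symm j).isLt
      show (σ.symm j : ℕ) ≤ n - 2
      omega
    calc x j = (x ∘ σ) (σ.symm j) := by simp
      _ ≤ (x ∘ σ) snd := hmono hj_snd
      _ ≤ t := h
  · rintro ⟨i, hi⟩
    by_cases hc : σ snd = i
    · have htop : σ top ≠ i := hc ▸ fun he => hsnd_top.ne' (σ.injective he)
      exact (hmono hsnd_top.le).trans (hi _ htop)
    · exact hi _ hc

lemma setOf_kthLargest_two_le {n : ℕ} (hn : 2 ≤ n) (t : ℝ) :
    {x : Fin n → ℝ | kthLargest x 2 ≤ t} =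
      (univ.pi fun _ => Iic t) ∪ ⋃ i, univ.pi (Function.update (fun _ => Iic t) i (Ioi t)) := by
  ext x
  simp only [mem_ofPred_eq, kthLargest_two_le_iff hn, mem_union, mem_iUnion, mem_univ_pi,
    Function.update_apply, mem_Iic]
  constructor
  · rintro ⟨i, hi⟩
    by_cases hxi : x i ≤ t
    · exact Or.inl fun j => if hj : j = i then hj ▸ hxi else hi j hj
    · exact Or.inr ⟨i, fun j => by split_ifs with hj <;> simp_all⟩
  · rintro (hx | ⟨i, hx⟩)
    · exact ⟨⟨0, by omega⟩, fun j _ => hx j⟩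
    · exact ⟨i, fun j hj => by simpa [hj] using hx j⟩

lemma measurableSet_univ_pi_update_Ioi {n : ℕ} (t : ℝ) (i : Fin n) :
    MeasurableSet (univ.pi (Function.update (fun _ => Iic t) i (Ioi t))) := by
  refine MeasurableSet.univ_pi fun j => ?_
  rcases eq_or_ne j i with rfl | hj
  · simp [measurableSet_Ioi]
  · simp [hj, measurableSet_Iic]

lemma measurable_kthLargest_two {n : ℕ} (hn : 2 ≤ n) :
    Measurable fun x : Fin n → ℝ => kthLargest x 2 :=
  measurable_of_Iic fun t => by
    change MeasurableSet {x | kthLargest x 2 ≤ t}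
    rw [setOf_kthLargest_two_le hn]
    exact (MeasurableSet.univ_pi fun _ => measurableSet_Iic).union
      (MeasurableSet.iUnion (measurableSet_univ_pi_update_Ioi t))

lemma pi_setOf_kthLargest_two_le {n : ℕ} (hn : 2 ≤ n) (μ : Measure ℝ) [IsProbabilityMeasure μ]
    (t : ℝ) :
    Measure.pi (fun _ : Fin n => μ) {x | kthLargest x 2 ≤ t} =
      μ (Iic t) ^ n + n * (μ (Ioi t) * μ (Iic t) ^ (n - 1)) := by
  have hdisj : Pairwise (Function.onFun Disjoint fun i : Fin n =>
      univ.pi (Function.update (fun _ => Iic t) i (Ioi t))) := by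
    intro i j hij
    refine Set.disjoint_left.2 fun x hxi hxj => ?_
    have h1 := hxi i (mem_univ _)
    have h2 := hxj i (mem_univ _)
    simp only [Function.update_self, Function.update_of_ne hij, mem_Ioi, mem_Iic] at h1 h2
    exact h1.not_ge h2
  have hdisj' : Disjoint (univ.pi fun _ : Fin n => Iic t)
      (⋃ i, univ.pi (Function.update (fun _ => Iic t) i (Ioi t))) := by
    refine Set.disjoint_iUnion_right.2 fun i => Set.disjoint_left.2 fun x hx hx' => ?_
    have h1 := hx i (mem_univ _)
    have h2 := hx' i (mem_univ _)
    simp only [Function.update_self, mem_Ioi, mem_Iic] at h1 h2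
    exact h2.not_ge h1
  have hmeas := measurableSet_univ_pi_update_Ioi (n := n) t
  have hcell : ∀ i : Fin n, ∏ j, μ (Function.update (fun _ => Iic t) i (Ioi t) j) =
      μ (Ioi t) * μ (Iic t) ^ (n - 1) := by
    intro i
    simp [Function.apply_update (fun _ => μ), Finset.prod_update_of_mem, Finset.card_sdiff]
  rw [setOf_kthLargest_two_le hn, measure_union hdisj' (MeasurableSet.iUnion hmeas),
    measure_iUnion hdisj hmeas, tsum_fintype, Measure.pi_pi]
  simp only [Measure.pi_pi, hcell, Finset.prod_const, Finset.sum_const, Finset.card_univ,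
    Fintype.card_fin, nsmul_eq_mul]

lemma unif_Iic_of_nonpos {t : ℝ} (ht : t ≤ 0) : unif (Iic t) = 0 := by
  rw [unif, Measure.restrict_apply measurableSet_Iic]
  exact measure_mono_null (fun y hy => le_antisymm (hy.1.trans ht) hy.2.1) (measure_singleton 0)

lemma unif_Iic_of_mem {t : ℝ} (ht : t ∈ Icc (0 : ℝ) 1) : unif (Iic t) = ENNReal.ofReal t := by
  have : Iic t ∩ Icc 0 1 = Icc 0 t := by
    ext y
    simp only [mem_inter_iff, mem_Iic, mem_Icc]
    exact ⟨fun h => ⟨h.2.1, h.1⟩, fun h => ⟨h.2, h.1, h.2.trans ht.2⟩⟩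
  rw [unif, Measure.restrict_apply measurableSet_Iic, this, Real.volume_Icc, sub_zero]

lemma unif_Ioi_of_mem {t : ℝ} (ht : t ∈ Icc (0 : ℝ) 1) : unif (Ioi t) = ENNReal.ofReal (1 - t) := by
  rw [← compl_Iic, prob_compl_eq_one_sub measurableSet_Iic, unif_Iic_of_mem ht,
    ENNReal.ofReal_sub _ ht.1, ENNReal.ofReal_one]

lemma lintegral_unif (f : ℝ → ENNReal) : ∫⁻ u, f u ∂unif = ∫⁻ u in Ico 0 1, f u :=
  (setLIntegral_congr Ico_ae_eq_Icc).symm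

noncomputable def cdfSecondLargest (n : ℕ) (t : ℝ) : ℝ :=
  t ^ n + n * ((1 - t) * t ^ (n - 1))

lemma pi_unif_setOf_kthLargest_two_le {n : ℕ} (hn : 2 ≤ n) {t : ℝ} (ht : t ∈ Icc (0 : ℝ) 1) :
    Measure.pi (fun _ : Fin n => unif) {x | kthLargest x 2 ≤ t} =
      ENNReal.ofReal (cdfSecondLargest n t) := by
  have h1t : 0 ≤ 1 - t := sub_nonneg.2 ht.2
  rw [pi_setOf_kthLargest_two_le hn, unif_Iic_of_mem ht, unif_Ioi_of_mem ht, cdfSecondLargest,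
    ← ENNReal.ofReal_pow ht.1, ← ENNReal.ofReal_pow ht.1, ← ENNReal.ofReal_mul h1t,
    ← ENNReal.ofReal_natCast, ← ENNReal.ofReal_mul n.cast_nonneg,
    ← ENNReal.ofReal_add (pow_nonneg ht.1 _)
      (mul_nonneg n.cast_nonneg (mul_nonneg h1t (pow_nonneg ht.1 _)))]

lemma pi_unif_setOf_kthLargest_two_le_of_nonpos {n : ℕ} (hn : 2 ≤ n) {t : ℝ} (ht : t ≤ 0) :
    Measure.pi (fun _ : Fin n => unif) {x | kthLargest x 2 ≤ t} = 0 := by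
  simp [pi_setOf_kthLargest_two_le hn, unif_Iic_of_nonpos ht, zero_pow (by omega : n ≠ 0),
    zero_pow (by omega : n - 1 ≠ 0)]

lemma Wvar_le_iff_kthLargest_le {n : ℕ} (ℓ : ℕ) (x : Fin n → ℝ) {u : ℝ} (hu : u < 1) (p : ℝ) :
    Wvar ℓ x u ≤ p ↔ kthLargest x ℓ ≤ (p - u) / (1 - u) := by
  rw [le_div_iff₀ (sub_pos.2 hu), Wvar]
  constructor <;> intro h <;> linarith

lemma sub_div_sub_mem_Icc {p u : ℝ} (hu : u ≤ p) (hp : p ≤ 1) : (p - u) / (1 - u) ∈ Icc (0 : ℝ) 1 :=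
  ⟨div_nonneg (sub_nonneg.2 hu) (sub_nonneg.2 (hu.trans hp)), div_le_one_of_le₀ (by linarith)
    (by linarith)⟩

lemma cdfSecondLargest_nonneg (n : ℕ) {t : ℝ} (ht : t ∈ Icc (0 : ℝ) 1) :
    0 ≤ cdfSecondLargest n t :=
  add_nonneg (pow_nonneg ht.1 _)
    (mul_nonneg n.cast_nonneg (mul_nonneg (sub_nonneg.2 ht.2) (pow_nonneg ht.1 _)))

lemma hasDerivAt_cdfSecondLargest_antideriv (n : ℕ) (p : ℝ) {u : ℝ} (hu : u ≠ 1) :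
    HasDerivAt (fun v => -(1 - v) * ((p - v) / (1 - v)) ^ (n + 1))
      (cdfSecondLargest (n + 1) ((p - u) / (1 - u))) u := by
  have h1u : 1 - u ≠ 0 := sub_ne_zero.2 hu.symm
  have hc := ((hasDerivAt_id' u).const_sub p).fun_div ((hasDerivAt_id' u).const_sub 1) h1u
  refine (((hasDerivAt_id' u).const_sub 1).fun_neg.fun_mul (hc.fun_pow (n + 1))).congr_deriv ?_
  simp only [cdfSecondLargest, Nat.add_sub_cancel]
  field_simp
  push_cast
  ring

lemma continuousOn_cdfSecondLargest_antideriv (n : ℕ) {p : ℝ} (hp : p ≤ 1) :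
    ContinuousOn (fun v => -(1 - v) * ((p - v) / (1 - v)) ^ (n + 1)) (Icc 0 p) := by
  rcases hp.lt_or_eq with hp | rfl
  · refine (continuousOn_const.sub continuousOn_id).neg.mul
      (((continuousOn_const.sub continuousOn_id).div (continuousOn_const.sub continuousOn_id)
        fun v hv => ?_).pow _)
    exact sub_ne_zero.2 (hv.2.trans_lt hp).ne'
  · -- off `v = 1` the quotient is `1`, and at `v = 1` both sides vanish since `0 / 0 = 0`
    have : (fun v : ℝ => -(1 - v) * ((1 - v) / (1 - v)) ^ (n + 1)) = fun v => -(1 - v) := by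
      ext v
      rcases eq_or_ne (1 - v) 0 with h | h <;> simp [h]
    rw [this]
    fun_prop

lemma lintegral_cdfSecondLargest {n : ℕ} (hn : 1 ≤ n) {p : ℝ} (hp0 : 0 ≤ p) (hp1 : p ≤ 1) :
    ∫⁻ u in Ico 0 p, ENNReal.ofReal (cdfSecondLargest n ((p - u) / (1 - u))) =
      ENNReal.ofReal (p ^ n) := by
  obtain ⟨m, rfl⟩ := Nat.exists_eq_add_of_le' hn
  have hderiv : ∀ u ∈ Ioo 0 p, HasDerivAt (fun v => -(1 - v) * ((p - v) / (1 - v)) ^ (m + 1))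
      (cdfSecondLargest (m + 1) ((p - u) / (1 - u))) u :=
    fun u hu => hasDerivAt_cdfSecondLargest_antideriv m p (hu.2.trans_le hp1).ne
  have hcont := continuousOn_cdfSecondLargest_antideriv m hp1
  have hnonneg : ∀ u ∈ Icc 0 p, 0 ≤ cdfSecondLargest (m + 1) ((p - u) / (1 - u)) :=
    fun u hu => cdfSecondLargest_nonneg _ (sub_div_sub_mem_Icc hu.2 hp1)
  have hint := intervalIntegral.integrableOn_deriv_of_nonneg hcont hderiv
    fun u hu => hnonneg u (Ioo_subset_Icc_self hu)
  rw [setLIntegral_congr Ico_ae_eq_Ioc, ← ofReal_integral_eq_lintegral_ofReal hint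
      ((ae_restrict_iff' measurableSet_Ioc).2 (.of_forall fun u hu =>
        hnonneg u (Ioc_subset_Icc_self hu))),
    ← intervalIntegral.integral_of_le hp0, intervalIntegral.integral_eq_sub_of_hasDerivAt_of_le
      hp0 hcont hderiv ((intervalIntegrable_iff_integrableOn_Ioc_of_le hp0).2 hint)]
  simp

/-- For `n ≥ 2`, the random variable `W_{2,n}` is identically distributed to
the maximum of `n` i.i.d. uniform draws from `[0,1]`: for every `p ∈ [0,1]`,
`Pr[W_{2,n} ≤ p] = p^n`. -/
theorem stmt3 (n : ℕ) (hn : 2 ≤ n) :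
    ∀ p ∈ Set.Icc (0 : ℝ) 1,
      (P₃ n {ω : (Fin n → ℝ) × ℝ | Wvar 2 ω.1 ω.2 ≤ p}).toReal = p ^ n := by
  rintro p ⟨hp0, hp1⟩
  set E : Set ((Fin n → ℝ) × ℝ) := {ω | Wvar 2 ω.1 ω.2 ≤ p}
  have hS : Measurable fun ω : (Fin n → ℝ) × ℝ => kthLargest ω.1 2 :=
    (measurable_kthLargest_two hn).comp measurable_fst
  have hE : MeasurableSet E :=
    measurableSet_le (hS.add (measurable_snd.mul (measurable_const.sub hS))) measurable_const
  have hsection : ∀ u < 1, (fun x => (x, u)) ⁻¹' E = {x | kthLargest x 2 ≤ (p - u) / (1 - u)} :=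
    fun u hu => ext fun x => Wvar_le_iff_kthLargest_le 2 x hu p
  have hbelow : EqOn (fun u => Measure.pi (fun _ : Fin n => unif) ((fun x => (x, u)) ⁻¹' E))
      (fun u => ENNReal.ofReal (cdfSecondLargest n ((p - u) / (1 - u)))) (Ico 0 p) :=
    fun u hu => by
      dsimp only
      rw [hsection u (hu.2.trans_le hp1),
        pi_unif_setOf_kthLargest_two_le hn (sub_div_sub_mem_Icc hu.2.le hp1)]
  have habove : EqOn (fun u => Measure.pi (fun _ : Fin n => unif) ((fun x => (x, u)) ⁻¹' E)) 0
      (Ico p 1) :=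
    fun u hu => by
      dsimp only
      rw [hsection u hu.2, pi_unif_setOf_kthLargest_two_le_of_nonpos hn
        (div_nonpos_of_nonpos_of_nonneg (sub_nonpos.2 hu.1) (sub_pos.2 hu.2).le), Pi.zero_apply]
  rw [P₃, Measure.prod_apply_symm hE, lintegral_unif, ← Ico_union_Ico_eq_Ico hp0 hp1,
    lintegral_union measurableSet_Ico Ico_disjoint_Ico_same,
    setLIntegral_congr_fun measurableSet_Ico hbelow,
    setLIntegral_congr_fun measurableSet_Ico habove, lintegral_cdfSecondLargest (by omega) hp0 hp1,
    Pi.zero_def, lintegral_zero, add_zero, ENNReal.toReal_ofReal (by positivity)]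
end

section
/- Let n ≥ 1 and ℓ ≥ 3 be integers, let c be a positive integer with c ≥ 4n/(ℓ−1), and let p ∈ [0,1]. Then n·p^{4(n−1)/(ℓ−2)} + Σ_{j=1}^{c} p^j ≥ (n + c)·p^c, where p^{4(n−1)/(ℓ−2)} denotes the real power of p with exponent 4(n−1)/(ℓ−2). -/
/-!
For `0 < p ≤ 1` the map `t ↦ p ^ t` is convex and antitone. Jensen's inequality for the points
`a = 4(n-1)/(ℓ-2)` (weight `n`) and `1, …, c` (weight `1` each) bounds the right-hand side below by
`(n + c) · p ^ m`, where `m = (n a + c(c+1)/2)/(n + c)` is their weighted mean; the hypothesis on `c`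
gives `m ≤ c`, hence `p ^ m ≥ p ^ c`. The case `p = 0` is trivial.
-/

open Finset

theorem ConvexOn.sum_mul_le_sum_of_antitoneOn {ι : Type*} {s : Set ℝ} {f : ℝ → ℝ}
    (hf : ConvexOn ℝ s f) (hf' : AntitoneOn f s) {t : Finset ι} {w x : ι → ℝ}
    (hw : ∀ i ∈ t, 0 ≤ w i) (hW : 0 < ∑ i ∈ t, w i) (hx : ∀ i ∈ t, x i ∈ s) {y : ℝ}
    (hy : y ∈ s) (hmean : ∑ i ∈ t, w i * x i ≤ (∑ i ∈ t, w i) * y) :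
    (∑ i ∈ t, w i) * f y ≤ ∑ i ∈ t, w i * f (x i) := by
  have hmem : t.centerMass w x ∈ s := hf.1.centerMass_mem hw hW hx
  have hle : t.centerMass w x ≤ y := by
    rw [centerMass, smul_eq_mul, inv_mul_le_iff₀ hW]; simpa using hmean
  have h := (hf' hmem hy hle).trans (hf.map_centerMass_le hw hW hx)
  simp only [centerMass, smul_eq_mul, Function.comp_apply] at h
  rwa [le_inv_mul_iff₀ hW] at h

theorem sum_Icc_one_natCast (c : ℕ) : ∑ j ∈ Icc 1 c, (j : ℝ) = c * (c + 1) / 2 := by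
  induction c with
  | zero => simp
  | succ c ih =>
    rw [sum_Icc_succ_top (Nat.le_add_left 1 c), ih]
    push_cast
    ring

theorem mul_four_mul_sub_one_div_le {n c L : ℝ} (hn : 1 ≤ n) (hc : 1 ≤ c) (hL : 1 ≤ L)
    (hcn : 4 * n ≤ c * (L + 1)) :
    n * (4 * (n - 1) / L) ≤ n * c + c * (c - 1) / 2 := by
  have hL0 : 0 < L := by linarith
  have h1 : 2 * (n - 1) ≤ (c + 1) * L := by nlinarith
  have h2 : 8 * n * (n - 1) ≤ 2 * (n - 1) * (c * (L + 1)) := by nlinarith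
  rw [mul_div_assoc', div_le_iff₀ hL0]
  nlinarith

/-- For integers `n ≥ 1`, `ℓ ≥ 3`, a positive integer `c ≥ 4n/(ℓ-1)`, and
`p ∈ [0,1]`: `n·p^{4(n-1)/(ℓ-2)} + Σ_{j=1}^{c} p^j ≥ (n+c)·p^c`, where
`p^{4(n-1)/(ℓ-2)}` is a real power. -/
theorem stmt6 (n ℓ c : ℕ) (hn : 1 ≤ n) (hℓ : 3 ≤ ℓ) (hc : 1 ≤ c)
    (hcb : (4 * n : ℝ) / ((ℓ : ℝ) - 1) ≤ (c : ℝ)) (p : ℝ) (hp : p ∈ Set.Icc (0 : ℝ) 1) :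
    ((n : ℝ) + (c : ℝ)) * p ^ c ≤
      (n : ℝ) * p ^ ((4 * ((n : ℝ) - 1)) / ((ℓ : ℝ) - 2)) + ∑ j ∈ Finset.Icc 1 c, p ^ j := by
  obtain ⟨hp0, hp1⟩ := hp
  rcases hp0.eq_or_lt with rfl | hp
  · rw [zero_pow (by omega), mul_zero]
    positivity
  have hℓ' : (3 : ℝ) ≤ ℓ := by exact_mod_cast hℓ
  have hmean : (n : ℝ) * (4 * (n - 1) / (ℓ - 2)) + ∑ j ∈ Icc 1 c, (j : ℝ) ≤ (n + c) * c := by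
    have := mul_four_mul_sub_one_div_le (n := n) (c := c) (L := ℓ - 2) (by exact_mod_cast hn)
      (by exact_mod_cast hc) (by linarith)
      (by rw [div_le_iff₀ (by linarith)] at hcb; linarith)
    rw [sum_Icc_one_natCast]
    linarith
  have hjensen := (convexOn_rpow_left hp).sum_mul_le_sum_of_antitoneOn
    ((Real.antitone_rpow_of_base_le_one hp hp1).antitoneOn _) (t := insertNone (Icc 1 c))
    (w := fun i => i.elim (n : ℝ) 1) (x := fun i => i.elim (4 * ((n : ℝ) - 1) / (ℓ - 2)) (↑))
    (y := c) (by rintro (_ | _) _ <;> simp)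
    (by simpa [sum_insertNone] using (by positivity : (0 : ℝ) < n + c))
    (by simp) (Set.mem_univ _) (by simpa [sum_insertNone] using hmean)
  simpa [sum_insertNone, Real.rpow_natCast] using hjensen
end

section
/- Let n ≥ 1 and m ≥ 2 be integers, let p ∈ [0,1], and let c be a real number with c ≥ n(m−1)/(n+m−2) + Σ_{i=1}^{m−2} n·i/((n+i)(n+i−1)). Then p^c ≤ n·p^{m−1}/(n+m−2) + Σ_{i=1}^{m−2} n·p^{i}/((n+i)(n+i−1)). -/
/-!
The coefficients `n/(n+m-2)` of `p^(m-1)` and `n/((n+i)(n+i-1))` of `p^i` telescope to `1`, so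
they are the weights of a probability distribution on the exponents `1, …, m-1`, and the bound
on `c` says that `c` is at least the mean exponent. Since `p ≤ 1`, `p^c` is at most `p` to the
mean exponent, which by Jensen's inequality for the convex function `x ↦ p^x` is at most the mean
of the `p^i`.
-/

open Finset

theorem rpow_le_sum_mul_rpow {ι : Type*} (s : Finset ι) (w e : ι → ℝ) (hw₀ : ∀ i ∈ s, 0 ≤ w i)
    (hw₁ : ∑ i ∈ s, w i = 1) {p c : ℝ} (hp₀ : 0 ≤ p) (hp₁ : p ≤ 1) (hc₀ : 0 < c)
    (hc : ∑ i ∈ s, w i * e i ≤ c) : p ^ c ≤ ∑ i ∈ s, w i * p ^ e i := by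
  rcases hp₀.eq_or_lt with rfl | hp
  · rw [Real.zero_rpow hc₀.ne']
    exact sum_nonneg fun i hi => mul_nonneg (hw₀ i hi) (Real.rpow_nonneg le_rfl _)
  calc p ^ c ≤ p ^ ∑ i ∈ s, w i * e i := Real.rpow_le_rpow_of_exponent_ge hp hp₁ hc
    _ ≤ ∑ i ∈ s, w i * p ^ e i :=
      (convexOn_rpow_left hp).map_sum_le hw₀ hw₁ fun i _ => Set.mem_univ (e i)

theorem div_add_sum_Icc_div_eq_one {a : ℝ} (ha : 0 < a) (k : ℕ) :
    a / (a + k) + ∑ i ∈ Icc 1 k, a / ((a + i) * (a + i - 1)) = 1 := by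
  induction k with
  | zero => simp [ha.ne']
  | succ k ih =>
    have hk : 0 < a + k := by positivity
    have step : a / (a + (k + 1)) + a / ((a + (k + 1)) * (a + (k + 1) - 1)) = a / (a + k) := by
      rw [show a + (k + 1) - 1 = a + k by ring]
      field_simp
      ring
    rw [sum_Icc_succ_top (by omega)]
    push_cast
    linarith

/-- For integers `n ≥ 1`, `m ≥ 2`, `p ∈ [0,1]`, and a real
`c ≥ n(m-1)/(n+m-2) + Σ_{i=1}^{m-2} n·i/((n+i)(n+i-1))`:
`p^c ≤ n·p^{m-1}/(n+m-2) + Σ_{i=1}^{m-2} n·p^i/((n+i)(n+i-1))`, where `p^c` is a real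
power. -/
theorem stmt11 (n m : ℕ) (hn : 1 ≤ n) (hm : 2 ≤ m) (p : ℝ) (hp : p ∈ Set.Icc (0 : ℝ) 1)
    (c : ℝ)
    (hc : (n : ℝ) * ((m : ℝ) - 1) / ((n : ℝ) + (m : ℝ) - 2) +
        ∑ i ∈ Finset.Icc 1 (m - 2),
          (n : ℝ) * (i : ℝ) / (((n : ℝ) + (i : ℝ)) * ((n : ℝ) + (i : ℝ) - 1)) ≤ c) :
    p ^ c ≤ (n : ℝ) * p ^ (m - 1) / ((n : ℝ) + (m : ℝ) - 2) +
      ∑ i ∈ Finset.Icc 1 (m - 2),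
        (n : ℝ) * p ^ i / (((n : ℝ) + (i : ℝ)) * ((n : ℝ) + (i : ℝ) - 1)) := by
  obtain ⟨k, rfl⟩ : ∃ k, m = k + 2 := ⟨m - 2, by omega⟩
  have ha : (0 : ℝ) < n := by exact_mod_cast hn
  have hnk : (0 : ℝ) < n + k := by linarith [k.cast_nonneg (α := ℝ)]
  have hden (i : ℕ) (hi : i ∈ Icc 1 k) : (0 : ℝ) < (n + i) * (n + i - 1) := by
    have : (1 : ℝ) ≤ i := by exact_mod_cast (mem_Icc.1 hi).1
    exact mul_pos (by linarith) (by linarith)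
  -- `none` stands for the top exponent `m - 1 = k + 1`.
  let w : Option ℕ → ℝ := fun o => o.elim (n / (n + k)) fun i => n / ((n + i) * (n + i - 1))
  let e : Option ℕ → ℝ := fun o => o.elim (k + 1) fun i => i
  have hw₀ : ∀ o ∈ (Icc 1 k).insertNone, 0 ≤ w o :=
    forall_mem_insertNone.2 ⟨(div_pos ha hnk).le, fun i hi => (div_pos ha (hden i hi)).le⟩
  have hw₁ : ∑ o ∈ (Icc 1 k).insertNone, w o = 1 := by
    simpa [sum_insertNone, w] using div_add_sum_Icc_div_eq_one ha k
  have hmean_pos : 0 < ∑ o ∈ (Icc 1 k).insertNone, w o * e o := by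
    rw [sum_insertNone]
    exact add_pos_of_pos_of_nonneg (by simp only [w, e, Option.elim]; positivity)
      (sum_nonneg fun i hi => mul_nonneg (hw₀ _ (some_mem_insertNone.2 hi)) i.cast_nonneg)
  have hmean_le : ∑ o ∈ (Icc 1 k).insertNone, w o * e o ≤ c := by
    refine Eq.trans_le ?_ hc
    simp only [sum_insertNone, w, e, Option.elim, Nat.add_sub_cancel, div_mul_eq_mul_div]
    push_cast
    ring_nf
  convert rpow_le_sum_mul_rpow _ w e hw₀ hw₁ hp.1 hp.2 (hmean_pos.trans_le hmean_le) hmean_le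
    using 1
  simp only [sum_insertNone, w, e, Option.elim, Nat.add_sub_cancel, div_mul_eq_mul_div,
    ← Real.rpow_natCast]
  push_cast
  ring_nf
end

section
/- Let m ≥ 2, n ≥ 2, and ℓ ≥ 1 be integers with ℓ − 1 ≤ n/2. Then 1 − (1 − (m−1)/(mn−1))^{ℓ−1} ≥ (1 − ln 2)·(ℓ−1)/(2n). -/
/-! Write `k = ℓ - 1` and `p = (m-1)/(mn-1)`. Since `m ≥ 2`, `p ≥ 1/(2n)`, and
`(1 - x)^k ≤ e^{-kx} ≤ 1/(1 + kx)`, so `1 - (1 - p)^k ≥ kx/(1 + kx)` with `x = 1/(2n)`.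
As `kx ≤ 1/4`, this is at least `(4/5)·kx`, and `4/5 ≥ 1 - ln 2`. -/

open Real

lemma one_sub_pow_le_inv_one_add_mul {x : ℝ} (hx₀ : 0 ≤ x) (hx₁ : x ≤ 1) (k : ℕ) :
    (1 - x) ^ k ≤ (1 + k * x)⁻¹ :=
  calc (1 - x) ^ k ≤ exp (-x) ^ k :=
        pow_le_pow_left₀ (sub_nonneg.2 hx₁) (one_sub_le_exp_neg x) k
    _ = (exp (k * x))⁻¹ := by rw [← exp_nat_mul, ← exp_neg, mul_neg]
    _ ≤ (1 + k * x)⁻¹ := inv_anti₀ (by positivity) (by linarith [add_one_le_exp (k * x)])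

lemma div_one_add_le_one_sub_inv_one_add {y c : ℝ} (hy : 0 ≤ y) (hyc : y ≤ c) :
    y / (1 + c) ≤ 1 - (1 + y)⁻¹ := by
  have hy' : 1 - (1 + y)⁻¹ = y / (1 + y) := by field_simp; ring
  rw [hy']
  exact div_le_div_of_nonneg_left hy (by linarith) (by linarith)

lemma mul_div_one_add_le_one_sub_one_sub_pow {x c : ℝ} (hx₀ : 0 ≤ x) (hx₁ : x ≤ 1)
    {k : ℕ} (hkx : k * x ≤ c) : k * x / (1 + c) ≤ 1 - (1 - x) ^ k := by
  linarith [div_one_add_le_one_sub_inv_one_add (by positivity) hkx,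
    one_sub_pow_le_inv_one_add_mul hx₀ hx₁ k]

lemma inv_two_mul_le_sub_one_div_mul_sub_one {m n : ℝ} (hm : 2 ≤ m) (hn : 1 ≤ n) :
    (2 * n)⁻¹ ≤ (m - 1) / (m * n - 1) := by
  rw [inv_eq_one_div, div_le_div_iff₀ (by linarith) (by nlinarith)]
  nlinarith

lemma sub_one_div_mul_sub_one_le_one {m n : ℝ} (hm : 1 < m) (hn : 1 ≤ n) :
    (m - 1) / (m * n - 1) ≤ 1 := by
  rw [div_le_one (by nlinarith)]
  nlinarith

/-- For integers `m ≥ 2`, `n ≥ 2`, `ℓ ≥ 1` with `ℓ - 1 ≤ n/2`: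
`1 - (1 - (m-1)/(mn-1))^{ℓ-1} ≥ (1 - ln 2)·(ℓ-1)/(2n)`. -/
theorem stmt13 (m n ℓ : ℕ) (hm : 2 ≤ m) (hn : 2 ≤ n) (hℓ : 1 ≤ ℓ)
    (hℓn : (ℓ : ℝ) - 1 ≤ (n : ℝ) / 2) :
    (1 - Real.log 2) * ((ℓ : ℝ) - 1) / (2 * (n : ℝ)) ≤
      1 - (1 - ((m : ℝ) - 1) / ((m : ℝ) * (n : ℝ) - 1)) ^ (ℓ - 1) := by
  have hm' : (2 : ℝ) ≤ m := by exact_mod_cast hm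
  have hn' : (2 : ℝ) ≤ n := by exact_mod_cast hn
  have hk : ((ℓ - 1 : ℕ) : ℝ) = ℓ - 1 := by rw [Nat.cast_sub hℓ, Nat.cast_one]
  set k := ℓ - 1
  set x := (2 * (n : ℝ))⁻¹
  have hkx : k * x ≤ 1 / 4 := by
    rw [hk, ← div_eq_mul_inv, div_le_iff₀ (by positivity)]
    linarith
  have hlog : 1 - log 2 ≤ (1 + 1 / 4)⁻¹ := by norm_num; linarith [log_two_gt_d9]
  calc (1 - log 2) * ((ℓ : ℝ) - 1) / (2 * (n : ℝ))
      = (1 - log 2) * (k * x) := by rw [hk]; ring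
    _ ≤ (1 + 1 / 4)⁻¹ * (k * x) := by gcongr
    _ = k * x / (1 + 1 / 4) := by ring
    _ ≤ 1 - (1 - x) ^ k :=
        mul_div_one_add_le_one_sub_one_sub_pow (by positivity)
          (inv_le_one_of_one_le₀ (by linarith)) hkx
    _ ≤ 1 - (1 - ((m : ℝ) - 1) / ((m : ℝ) * (n : ℝ) - 1)) ^ k := by
        gcongr
        · linarith [sub_one_div_mul_sub_one_le_one (m := m) (n := n) (by linarith) (by linarith)]
        · exact inv_two_mul_le_sub_one_div_mul_sub_one hm' (by linarith)
end

section
/- Let x and y be real numbers with x ∈ [0, 1/2], y ≥ 1, and x·y ≤ 1/2. Then 1 − (1 − x)^y ≥ (1 − ln 2)·x·y, where (1−x)^y denotes the real power. -/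
/-! Since `1 - x ≤ exp (-x)`, we have `(1 - x) ^ y ≤ exp (-t)` with `t = x * y`, and
`exp (-t) ≤ 1 / (1 + t)`. So `1 - (1 - x) ^ y ≥ t / (1 + t) ≥ 2 t / 3` for `t ≤ 1 / 2`,
and `2 / 3 ≥ 1 - log 2` because `log 2 > 1 / 3`. -/

open Real

lemma one_sub_rpow_le_exp_neg_mul {x y : ℝ} (hx : x ≤ 1) (hy : 0 ≤ y) :
    (1 - x) ^ y ≤ exp (-(x * y)) := by
  rw [neg_mul_eq_neg_mul, exp_mul]
  exact rpow_le_rpow (by linarith) (one_sub_le_exp_neg x) hy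

lemma div_one_add_le_one_sub_exp_neg {t : ℝ} (ht : -1 < t) :
    t / (1 + t) ≤ 1 - exp (-t) := by
  have hpos : 0 < 1 + t := by linarith
  have hinv : exp (-t) ≤ (1 + t)⁻¹ := by
    rw [exp_neg]
    exact inv_anti₀ hpos (by linarith [add_one_le_exp t])
  have hsplit : t / (1 + t) = 1 - (1 + t)⁻¹ := by field_simp; ring
  linarith

lemma one_sub_log_two_mul_le_one_sub_exp_neg {t : ℝ} (ht₀ : 0 ≤ t) (ht : t ≤ 1 / 2) :
    (1 - log 2) * t ≤ 1 - exp (-t) := by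
  have hpos : 0 < 1 + t := by linarith
  have hc : (1 - log 2) * (1 + t) ≤ 1 :=
    calc (1 - log 2) * (1 + t) ≤ 2 / 3 * (3 / 2) :=
          mul_le_mul (by linarith [log_two_gt_d9]) (by linarith) hpos.le (by norm_num)
      _ = 1 := by norm_num
  calc (1 - log 2) * t ≤ t / (1 + t) := by
        rw [le_div_iff₀ hpos]; nlinarith [mul_le_mul_of_nonneg_left hc ht₀]
    _ ≤ 1 - exp (-t) := div_one_add_le_one_sub_exp_neg (by linarith)

/-- For reals `x ∈ [0, 1/2]`, `y ≥ 1` with `x·y ≤ 1/2`: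
`1 - (1-x)^y ≥ (1 - ln 2)·x·y`, where `(1-x)^y` is a real power. -/
theorem stmt14 (x y : ℝ) (hx : x ∈ Set.Icc (0 : ℝ) (1 / 2)) (hy : 1 ≤ y)
    (hxy : x * y ≤ 1 / 2) :
    (1 - Real.log 2) * x * y ≤ 1 - (1 - x) ^ y := by
  obtain ⟨hx₀, hx₁⟩ := hx
  have hy₀ : 0 ≤ y := zero_le_one.trans hy
  calc (1 - log 2) * x * y = (1 - log 2) * (x * y) := mul_assoc _ _ _
    _ ≤ 1 - exp (-(x * y)) :=
      one_sub_log_two_mul_le_one_sub_exp_neg (mul_nonneg hx₀ hy₀) hxy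
    _ ≤ 1 - (1 - x) ^ y := by
      linarith [one_sub_rpow_le_exp_neg_mul (by linarith : x ≤ 1) hy₀]
end

section
/- Let q > 1 be a real number and let v_1, v_2 be i.i.d. random variables with the equal-revenue distribution ER. Then Pr[v_1 + v_2 ≥ 2q] = 2/(2q−1) + ((q − 1/2)·ln(2q−1) − q)/(q²·(2q−1)). -/
/-!
The equal-revenue distribution is the Pareto distribution of scale and shape `1`: it has density
`x⁻²` on `[1, ∞)` and no atoms, so `Pr[v ≥ s] = 1 / max s 1`. Conditioning on `v₁ = x` and
writing `b = 2q - 1`, the event `v₁ + v₂ ≥ b + 1` is certain for `x > b`, which contributes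
`Pr[v₁ > b] = 1 / b`, while `1 ≤ x ≤ b` contributes `∫₁ᵇ dx / (x² (b + 1 - x))`, an elementary
integral evaluated by partial fractions.
-/

open MeasureTheory ProbabilityTheory Set
open scoped ENNReal

lemma paretoPDF_one_one_of_one_le {x : ℝ} (hx : 1 ≤ x) :
    paretoPDF 1 1 x = ENNReal.ofReal (x ^ 2)⁻¹ := by
  rw [paretoPDF_of_le hx, ← Real.rpow_two, ← Real.rpow_neg (by linarith)]
  norm_num

lemma measurable_paretoPDF (t r : ℝ) : Measurable (paretoPDF t r) :=
  (measurable_paretoPDFReal t r).ennreal_ofReal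

lemma continuousOn_inv_sq_mul_sub (b : ℝ) :
    ContinuousOn (fun x : ℝ => (x ^ 2 * (b + 1 - x))⁻¹) (Icc 1 b) :=
  ContinuousOn.inv₀ (by fun_prop) fun x hx =>
    (mul_pos (pow_pos (by linarith [hx.1]) 2) (by linarith [hx.2])).ne'

lemma measure_prod_setOf_le_add_eq_lintegral (μ ν : Measure ℝ) [SFinite ν] (a : ℝ) :
    μ.prod ν {v : ℝ × ℝ | a ≤ v.1 + v.2} = ∫⁻ x, ν (Ici (a - x)) ∂μ := by
  rw [Measure.prod_apply (measurableSet_le measurable_const (by fun_prop))]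
  congr! with x
  ext y
  simp [add_comm]

lemma integral_inv_sq_mul_sub {b : ℝ} (hb : 1 < b) :
    ∫ x in (1 : ℝ)..b, (x ^ 2 * (b + 1 - x))⁻¹ =
      2 * Real.log b / (b + 1) ^ 2 + (b - 1) / ((b + 1) * b) := by
  have hpos : ∀ x ∈ uIcc 1 b, 0 < x ∧ 0 < b + 1 - x := fun x hx => by
    rw [uIcc_of_le hb.le] at hx
    exact ⟨by linarith [hx.1], by linarith [hx.2]⟩
  -- `1 / (x² (a - x)) = 1 / (a x²) + 1 / (a² x) + 1 / (a² (a - x))` with `a = b + 1`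
  have hderiv : ∀ x ∈ uIcc 1 b, HasDerivAt
      (fun y => (Real.log y - Real.log (b + 1 - y)) / (b + 1) ^ 2 - ((b + 1) * y)⁻¹)
      (x ^ 2 * (b + 1 - x))⁻¹ x := fun x hx => by
    obtain ⟨hx, hbx⟩ := hpos x hx
    have hlog : HasDerivAt (fun y => Real.log (b + 1 - y)) (-1 / (b + 1 - x)) x :=
      ((hasDerivAt_id x).const_sub (b + 1)).log hbx.ne'
    have hinv : HasDerivAt (fun y => ((b + 1) * y)⁻¹) (-(b + 1) / ((b + 1) * x) ^ 2) x := by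
      simpa using ((hasDerivAt_id x).const_mul (b + 1)).fun_inv (by positivity)
    refine ((((Real.hasDerivAt_log hx.ne').fun_sub hlog).div_const _).fun_sub hinv).congr_deriv ?_
    field_simp
    ring
  rw [intervalIntegral.integral_eq_sub_of_hasDerivAt hderiv
    (uIcc_of_le hb.le ▸ continuousOn_inv_sq_mul_sub b).intervalIntegrable]
  have hb0 : b ≠ 0 := by positivity
  simp only [add_sub_cancel_right, add_sub_cancel_left, Real.log_one]
  field_simp
  ring

def IsEqualRevenue (μ : Measure ℝ) : Prop :=
  ∀ t : ℝ, 1 ≤ t → μ (Ioi t) = ENNReal.ofReal (1 / t)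

lemma isEqualRevenue_paretoMeasure : IsEqualRevenue (paretoMeasure 1 1) := by
  intro t ht
  have ht0 : 0 < t := one_pos.trans_le ht
  rw [paretoMeasure, withDensity_apply _ measurableSet_Ioi,
    setLIntegral_congr_fun measurableSet_Ioi fun x hx => by
      rw [paretoPDF_one_one_of_one_le (ht.trans (le_of_lt hx)), ← Real.rpow_two,
        ← Real.rpow_neg (by linarith [mem_Ioi.1 hx])],
    ← ofReal_integral_eq_lintegral_ofReal
      (integrableOn_Ioi_rpow_of_lt (by norm_num) ht0)
      ((ae_restrict_mem measurableSet_Ioi).mono fun x hx =>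
        Real.rpow_nonneg (ht0.trans hx).le _),
    integral_Ioi_rpow_of_lt (by norm_num) ht0]
  norm_num [Real.rpow_neg_one]

instance {t r : ℝ} : NullSingletonClass (paretoMeasure t r) := by
  unfold paretoMeasure
  infer_instance

namespace IsEqualRevenue

variable {μ ν : Measure ℝ} [IsProbabilityMeasure μ]

lemma measure_Ioi (hμ : IsEqualRevenue μ) (t : ℝ) :
    μ (Ioi t) = ENNReal.ofReal (1 / max t 1) := by
  rcases le_total 1 t with ht | ht
  · rw [max_eq_left ht, hμ t ht]
  · refine le_antisymm ?_ ?_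
    · simp [max_eq_right ht, prob_le_one]
    · rw [max_eq_right ht, ← hμ 1 le_rfl]
      exact measure_mono (Ioi_subset_Ioi ht)

lemma ext [IsProbabilityMeasure ν] (hμ : IsEqualRevenue μ) (hν : IsEqualRevenue ν) : μ = ν :=
  Measure.ext_of_Iic μ ν fun t => by
    rw [← compl_Ioi, prob_compl_eq_one_sub measurableSet_Ioi,
      prob_compl_eq_one_sub measurableSet_Ioi, hμ.measure_Ioi, hν.measure_Ioi]

lemma eq_paretoMeasure (hμ : IsEqualRevenue μ) : μ = paretoMeasure 1 1 :=
  haveI := isProbabilityMeasure_paretoMeasure one_pos one_pos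
  hμ.ext isEqualRevenue_paretoMeasure

lemma measure_Ici (hμ : IsEqualRevenue μ) (t : ℝ) :
    μ (Ici t) = ENNReal.ofReal (1 / max t 1) := by
  rw [← hμ.measure_Ioi, hμ.eq_paretoMeasure, measure_congr Ioi_ae_eq_Ici]

lemma lintegral_measure_Ici_sub (hμ : IsEqualRevenue μ) {b : ℝ} (hb : 1 < b) :
    ∫⁻ x, μ (Ici (b + 1 - x)) ∂μ =
      ENNReal.ofReal (∫ x in (1 : ℝ)..b, (x ^ 2 * (b + 1 - x))⁻¹) + ENNReal.ofReal (1 / b) := by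
  simp_rw [hμ.measure_Ici]
  rw [hμ.eq_paretoMeasure, paretoMeasure, lintegral_withDensity_eq_lintegral_mul _
    (measurable_paretoPDF 1 1) (by fun_prop),
    ← setLIntegral_eq_of_support_subset (s := Ici 1) ?support, ← Icc_union_Ioi_eq_Ici hb.le,
    lintegral_union measurableSet_Ioi ((Iic_disjoint_Ioi le_rfl).mono_left Icc_subset_Iic_self)]
  case support =>
    exact Function.support_subset_iff'.2 fun x hx => by
      simp [paretoPDF_of_lt (not_le.1 hx)]
  congr 1
  · rw [setLIntegral_congr_fun measurableSet_Icc fun x hx => ?density,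
      ← ofReal_integral_eq_lintegral_ofReal
        ((continuousOn_inv_sq_mul_sub b).integrableOn_compact isCompact_Icc)
        ((ae_restrict_mem measurableSet_Icc).mono fun x hx =>
          inv_nonneg.2 (mul_nonneg (sq_nonneg x) (by linarith [hx.2]))),
      integral_Icc_eq_integral_Ioc, ← intervalIntegral.integral_of_le hb.le]
    case density =>
      rw [Pi.mul_apply, paretoPDF_one_one_of_one_le hx.1, max_eq_left (by linarith [hx.2]),
        ← ENNReal.ofReal_mul (by positivity), one_div, mul_inv]
  · rw [setLIntegral_congr_fun measurableSet_Ioi fun x hx => ?density,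
      ← withDensity_apply _ measurableSet_Ioi, ← paretoMeasure,
      isEqualRevenue_paretoMeasure b hb.le]
    case density =>
      rw [Pi.mul_apply, max_eq_right (by linarith [mem_Ioi.1 hx]), div_one,
        ENNReal.ofReal_one, mul_one]

lemma measure_prod_setOf_le_add (hμ : IsEqualRevenue μ) {b : ℝ} (hb : 1 < b) :
    μ.prod μ {v : ℝ × ℝ | b + 1 ≤ v.1 + v.2} = ENNReal.ofReal
      (2 * Real.log b / (b + 1) ^ 2 + (b - 1) / ((b + 1) * b) + 1 / b) := by
  have hlog := Real.log_nonneg hb.le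
  rw [measure_prod_setOf_le_add_eq_lintegral, hμ.lintegral_measure_Ici_sub hb,
    integral_inv_sq_mul_sub hb,
    ← ENNReal.ofReal_add (by positivity) (by positivity)]

end IsEqualRevenue

/-- Let `μ` be the equal-revenue distribution, i.e. the probability measure
on `ℝ` with `Pr[V > t] = 1/t` for all `t ≥ 1`.  For `q > 1` and `v₁, v₂` i.i.d. with
distribution `μ`:
`Pr[v₁ + v₂ ≥ 2q] = 2/(2q-1) + ((q - 1/2)·ln(2q-1) - q)/(q²·(2q-1))`. -/
theorem stmt17 (μ : Measure ℝ) [IsProbabilityMeasure μ]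
    (hER : ∀ t : ℝ, 1 ≤ t → μ (Set.Ioi t) = ENNReal.ofReal (1 / t))
    (q : ℝ) (hq : 1 < q) :
    ((μ.prod μ) {v : ℝ × ℝ | 2 * q ≤ v.1 + v.2}).toReal =
      2 / (2 * q - 1) +
        ((q - 1 / 2) * Real.log (2 * q - 1) - q) / (q ^ 2 * (2 * q - 1)) := by
  have hb : 1 < 2 * q - 1 := by linarith
  have h := IsEqualRevenue.measure_prod_setOf_le_add hER hb
  rw [sub_add_cancel] at h
  have hlog := Real.log_nonneg hb.le
  rw [h, ENNReal.toReal_ofReal (by positivity)]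
  field_simp
  ring
end
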